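/- Let (ι, A, I, z, x) be a GI datum and (ι', A, I, z', x') a Kramers–Wannier dual datum for it. Then the complex dimensions of the symmetric sector L₀ and of the dual symmetric sector L₀' are equal. -/

import Mathlib

/-!
Both sectors are spaces of functions on `ι → ZMod 2` that are supported on a subspace `P` and
invariant under translation by `ker π ⊓ P`, where `π s = (z α ⬝ᵥ s)_α`; such a space is the space of
functions on `π(P)`, of dimension `|π(P)|`. For `L₀` the Z-symmetries cut the support down to
`P = span x`, and the compatible X-symmetries are exactly the translations by `ker π ⊓ span x`.
For `L₀'` the support is `P' = Wᗮ` with `W = span z' ⊓ (span x')ᗮ`, and the X-symmetries are the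
translations by `ker π' ≤ P'`. Since `c ⬝ᵥ π' s = (∑ α, c α • z' α) ⬝ᵥ s`, the space `W` is the
image of `(π'(span x'))ᗮ` under the transpose of `π'`, so `P' = π'⁻¹(π'(span x'))` and
`π'(P') = π'(span x')`. Finally `π(span x)` and `π'(span x')` are spanned by the vectors
`(z α ⬝ᵥ x i)_α = (z' α ⬝ᵥ x' i)_α`, which agree by the Kramers–Wannier condition.
-/

noncomputable section

/-- The `ZMod 2`-valued dot product `u·v = ∑ j, u j * v j`. -/
def dotp {ι : Type} [Fintype ι] (u v : ι → ZMod 2) : ZMod 2 := ∑ j, u j * v j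

/-- The X-type Pauli operator `X_u`: the permutation matrix with
`(X_u)_{s,t} = 1` iff `s = t + u`. -/
def Xop {ι : Type} [Fintype ι] (u : ι → ZMod 2) :
    Matrix (ι → ZMod 2) (ι → ZMod 2) ℂ :=
  Matrix.of fun s t => if s = t + u then 1 else 0

/-- The Z-type Pauli operator `Z_v`: the diagonal matrix with
`(Z_v)_{s,s} = (-1)^(v·s)`. -/
def Zop {ι : Type} [Fintype ι] (v : ι → ZMod 2) :
    Matrix (ι → ZMod 2) (ι → ZMod 2) ℂ :=
  Matrix.of fun s t => if s = t then (-1 : ℂ) ^ (dotp v s).val else 0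

/-- The standard inner product on the `ι`-qubit Hilbert space `(ι → ZMod 2) → ℂ`. -/
def qInner {ι : Type} [Fintype ι] [DecidableEq ι] (ψ φ : (ι → ZMod 2) → ℂ) : ℂ :=
  ∑ s, (starRingEnd ℂ) (ψ s) * φ s

/-- The subspace of vectors fixed by every operator in a given set of matrices. -/
def fixedSpace {ι : Type} [Fintype ι] [DecidableEq ι]
    (Ms : Set (Matrix (ι → ZMod 2) (ι → ZMod 2) ℂ)) :
    Submodule ℂ ((ι → ZMod 2) → ℂ) :=
  ⨅ M ∈ Ms, LinearMap.ker (Matrix.mulVecLin M - LinearMap.id)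
/-- The symmetric sector `L₀` of a GI datum `(ι, A, I, z, x)`: vectors fixed by every
Z-type symmetry `Z_v` (`v·(x i) = 0` for all `i`) and every compatible X-type symmetry
`X_u` (`u·(z α) = 0` for all `α`, and `u·v = 0` for every `v` with `v·(x i) = 0` for all `i`). -/
def giL0 (ι A I : Type) [Fintype ι] [DecidableEq ι] [Fintype A] [Fintype I]
    (z : A → ι → ZMod 2) (x : I → ι → ZMod 2) : Submodule ℂ ((ι → ZMod 2) → ℂ) :=
  fixedSpace
    ({M | ∃ v : ι → ZMod 2, (∀ i, dotp v (x i) = 0) ∧ M = Zop v} ∪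
     {M | ∃ u : ι → ZMod 2, (∀ α, dotp u (z α) = 0) ∧
        (∀ v : ι → ZMod 2, (∀ i, dotp v (x i) = 0) → dotp u v = 0) ∧ M = Xop u})

/-- The dual symmetric sector `L₀'` of a dual datum `(ι', A, I, z', x')`: vectors fixed
by every X-type symmetry `X_{u'}` (`u'·(z' α) = 0` for all `α`) and every compatible
Z-type symmetry `Z_{v'}` (`v'` in the span of the `z' α` and `v'·(x' i) = 0` for all `i`). -/
def dualL0 (ι' A I : Type) [Fintype ι'] [DecidableEq ι'] [Fintype A] [Fintype I]
    (z' : A → ι' → ZMod 2) (x' : I → ι' → ZMod 2) : Submodule ℂ ((ι' → ZMod 2) → ℂ) :=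
  fixedSpace
    ({M | ∃ u' : ι' → ZMod 2, (∀ α, dotp u' (z' α) = 0) ∧ M = Xop u'} ∪
     {M | ∃ v' : ι' → ZMod 2, v' ∈ Submodule.span (ZMod 2) (Set.range z') ∧
        (∀ i, dotp v' (x' i) = 0) ∧ M = Zop v'})

open Matrix Submodule LinearMap Set Module

section DotOrthogonal

variable {K κ : Type*} [Field K] [Fintype κ]

def dotOrthogonal (N : Submodule K (κ → K)) : Submodule K (κ → K) :=
  LinearMap.BilinForm.orthogonal (dotProductBilin K K) N

lemma mem_dotOrthogonal_iff {N : Submodule K (κ → K)} {v : κ → K} :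
    v ∈ dotOrthogonal N ↔ ∀ n ∈ N, n ⬝ᵥ v = 0 :=
  Iff.rfl

lemma mem_dotOrthogonal_span_range_iff {η : Type*} (f : η → κ → K) (v : κ → K) :
    v ∈ dotOrthogonal (span K (range f)) ↔ ∀ i, f i ⬝ᵥ v = 0 :=
  ⟨fun h i => h _ (subset_span (mem_range_self i)), fun h _ hn =>
    (span_le (p := ker ((dotProductBilin K K).flip v))).2 (range_subset_iff.2 h) hn⟩

lemma dotOrthogonal_dotOrthogonal (N : Submodule K (κ → K)) :
    dotOrthogonal (dotOrthogonal N) = N := by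
  have hrefl : (dotProductBilin K K : LinearMap.BilinForm K (κ → K)).IsRefl :=
    fun u v h => by simpa [dotProduct_comm] using h
  refine LinearMap.BilinForm.orthogonal_orthogonal ?_ hrefl N
  exact (LinearMap.IsRefl.nondegenerate_iff_separatingLeft hrefl).2 fun v hv =>
    dotProduct_eq_zero v hv

end DotOrthogonal

section SupportedPeriodic

variable {R V W 𝕜 : Type*} [Ring R] [AddCommGroup V] [Module R V] [AddCommGroup W] [Module R W]
  [Field 𝕜]

variable (𝕜) in
def supportedPeriodic (P Q : Submodule R V) : Submodule 𝕜 (V → 𝕜) where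
  carrier := {ψ | (∀ s ∉ P, ψ s = 0) ∧ ∀ u ∈ Q, ∀ s, ψ (s + u) = ψ s}
  add_mem' ha hb := ⟨fun s hs => by simp [ha.1 s hs, hb.1 s hs],
    fun u hu s => by simp [ha.2 u hu s, hb.2 u hu s]⟩
  zero_mem' := ⟨fun _ _ => rfl, fun _ _ _ => rfl⟩
  smul_mem' c _ h := ⟨fun s hs => by simp [h.1 s hs], fun u hu s => by simp [h.2 u hu s]⟩

lemma mem_supportedPeriodic {P Q : Submodule R V} {ψ : V → 𝕜} :
    ψ ∈ supportedPeriodic 𝕜 P Q ↔ (∀ s ∉ P, ψ s = 0) ∧ ∀ u ∈ Q, ∀ s, ψ (s + u) = ψ s :=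
  Iff.rfl

variable (𝕜) in
open Classical in
def pullbackOn (π : V →ₗ[R] W) (P : Submodule R V) : (P.map π → 𝕜) →ₗ[𝕜] (V → 𝕜) where
  toFun g s := if h : s ∈ P then g ⟨π s, mem_map_of_mem h⟩ else 0
  map_add' g g' := by ext s; by_cases h : s ∈ P <;> simp [h]
  map_smul' c g := by ext s; by_cases h : s ∈ P <;> simp [h]

variable {π : V →ₗ[R] W} {P : Submodule R V}

lemma pullbackOn_apply_of_mem {s : V} (hs : s ∈ P) (g : P.map π → 𝕜) :
    pullbackOn 𝕜 π P g s = g ⟨π s, mem_map_of_mem hs⟩ :=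
  dif_pos hs

lemma pullbackOn_apply_of_notMem {s : V} (hs : s ∉ P) (g : P.map π → 𝕜) :
    pullbackOn 𝕜 π P g s = 0 :=
  dif_neg hs

lemma pullbackOn_injective : Function.Injective (pullbackOn 𝕜 π P) := by
  intro g g' h
  funext ⟨t, ht⟩
  obtain ⟨s, hs, rfl⟩ := mem_map.1 ht
  simpa [pullbackOn_apply_of_mem hs] using congrFun h s

lemma range_pullbackOn :
    LinearMap.range (pullbackOn 𝕜 π P) = supportedPeriodic 𝕜 P (ker π ⊓ P) := by
  ext ψ
  constructor
  · rintro ⟨g, rfl⟩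
    refine ⟨fun s hs => pullbackOn_apply_of_notMem hs g, fun u ⟨hu, huP⟩ s => ?_⟩
    by_cases hs : s ∈ P
    · simp only [pullbackOn_apply_of_mem hs, pullbackOn_apply_of_mem (add_mem hs huP), map_add,
        mem_ker.1 hu, add_zero]
    · have hsu : s + u ∉ P := fun h => hs (by simpa using sub_mem h huP)
      rw [pullbackOn_apply_of_notMem hs, pullbackOn_apply_of_notMem hsu]
  · rintro ⟨hsupp, hper⟩
    choose σ hσP hσ using fun t : P.map π => mem_map.1 t.2
    refine ⟨ψ ∘ σ, funext fun s => ?_⟩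
    by_cases hs : s ∈ P
    · set t : P.map π := ⟨π s, mem_map_of_mem hs⟩
      have hdiff : σ t - s ∈ ker π ⊓ P := ⟨by simp [hσ t, t], sub_mem (hσP t) hs⟩
      simpa [pullbackOn_apply_of_mem hs] using hper _ hdiff s
    · rw [pullbackOn_apply_of_notMem hs, hsupp s hs]

lemma finrank_supportedPeriodic [Finite W] (π : V →ₗ[R] W) (P : Submodule R V) :
    finrank 𝕜 (supportedPeriodic 𝕜 P (ker π ⊓ P)) = Nat.card (P.map π) := by
  have := Fintype.ofFinite (P.map π)
  rw [← range_pullbackOn, finrank_range_of_inj pullbackOn_injective, finrank_pi,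
    Nat.card_eq_fintype_card]

end SupportedPeriodic

section Pauli

variable {κ : Type} [Fintype κ]

lemma dotp_eq_dotProduct (u v : κ → ZMod 2) : dotp u v = u ⬝ᵥ v := rfl

variable [DecidableEq κ]

lemma Zop_mulVec_eq_self_iff (v : κ → ZMod 2) (ψ : (κ → ZMod 2) → ℂ) :
    Zop v *ᵥ ψ = ψ ↔ ∀ s, v ⬝ᵥ s ≠ 0 → ψ s = 0 := by
  have hsign : ∀ (a : ZMod 2) (c : ℂ), (-1) ^ a.val * c = c ↔ (a ≠ 0 → c = 0) := by
    intro a c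
    obtain rfl | rfl : a = 0 ∨ a = 1 := by revert a; decide
    · simp
    · simp [ZMod.val_one, CharZero.neg_eq_self_iff]
  have happly : ∀ s, (Zop v *ᵥ ψ) s = (-1) ^ (v ⬝ᵥ s).val * ψ s := fun s => by
    simp [Zop, mulVec, dotProduct, ite_mul, Finset.sum_ite_eq, dotp_eq_dotProduct]
  simp only [funext_iff, happly, hsign]

lemma Xop_mulVec_eq_self_iff (u : κ → ZMod 2) (ψ : (κ → ZMod 2) → ℂ) :
    Xop u *ᵥ ψ = ψ ↔ ∀ s, ψ (s + u) = ψ s := by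
  have hshift : ∀ s t : κ → ZMod 2, s = t + u ↔ t = s + u := fun s t => by
    constructor <;> rintro rfl <;> ext j <;> simp [add_assoc, CharTwo.add_self_eq_zero]
  have happly : ∀ s, (Xop u *ᵥ ψ) s = ψ (s + u) := fun s => by
    simp [Xop, mulVec, dotProduct, hshift s, ite_mul, Finset.sum_ite_eq']
  simp only [funext_iff, happly]

lemma mem_fixedSpace {Ms : Set (Matrix (κ → ZMod 2) (κ → ZMod 2) ℂ)} {ψ : (κ → ZMod 2) → ℂ} :
    ψ ∈ fixedSpace Ms ↔ ∀ M ∈ Ms, M *ᵥ ψ = ψ := by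
  simp [fixedSpace, mem_iInf, sub_eq_zero]

lemma fixedSpace_Zop_union_Xop (V U : Submodule (ZMod 2) (κ → ZMod 2)) :
    fixedSpace ({M | ∃ v ∈ V, M = Zop v} ∪ {M | ∃ u ∈ U, M = Xop u}) =
      supportedPeriodic ℂ (dotOrthogonal V) U := by
  ext ψ
  simp only [mem_fixedSpace, mem_supportedPeriodic, Set.mem_union, or_imp, forall_and]
  refine and_congr ⟨fun h s hs => ?_, fun h _ ⟨v, hv, hM⟩ => ?_⟩
    ⟨fun h u hu => (Xop_mulVec_eq_self_iff u ψ).1 (h _ ⟨u, hu, rfl⟩),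
      fun h _ ⟨u, hu, hM⟩ => hM ▸ (Xop_mulVec_eq_self_iff u ψ).2 (h u hu)⟩
  · obtain ⟨v, hv, hvs⟩ : ∃ v ∈ V, v ⬝ᵥ s ≠ 0 := by simpa [mem_dotOrthogonal_iff] using hs
    exact (Zop_mulVec_eq_self_iff v ψ).1 (h _ ⟨v, hv, rfl⟩) s hvs
  · exact hM ▸ (Zop_mulVec_eq_self_iff v ψ).2 fun s hvs => h s fun hV => hvs (hV v hv)

end Pauli

section KramersWannier

variable {K A : Type*} [Field K]

lemma ker_mulVecLin_of {κ : Type*} [Fintype κ] (z : A → κ → K) :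
    ker (of z).mulVecLin = dotOrthogonal (span K (range z)) := by
  ext u
  rw [mem_ker, mem_dotOrthogonal_span_range_iff, mulVecLin_apply, funext_iff]
  rfl

lemma map_mulVecLin_span_range_eq {ι ι' I : Type*} [Fintype ι] [Fintype ι'] (z : A → ι → K)
    (x : I → ι → K) (z' : A → ι' → K) (x' : I → ι' → K)
    (h : ∀ α i, z α ⬝ᵥ x i = z' α ⬝ᵥ x' i) :
    map (of z).mulVecLin (span K (range x)) = map (of z').mulVecLin (span K (range x')) := by
  simp only [Submodule.map_span, ← Set.range_comp]
  congr 2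
  funext i α
  exact h α i

variable [Fintype A]

lemma dotProduct_mulVec_of {κ : Type*} [Fintype κ] (z : A → κ → K) (c : A → K) (s : κ → K) :
    c ⬝ᵥ (of z *ᵥ s) = (∑ α, c α • z α) ⬝ᵥ s := by
  rw [dotProduct_mulVec, vecMul_eq_sum]
  rfl

lemma dotOrthogonal_span_range_inf_dotOrthogonal {κ : Type*} [Fintype κ] (z : A → κ → K)
    (N : Submodule K (κ → K)) :
    dotOrthogonal (span K (range z) ⊓ dotOrthogonal N) =
      comap (of z).mulVecLin (map (of z).mulVecLin N) := by
  have horth : ∀ c : A → K,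
      ∑ α, c α • z α ∈ dotOrthogonal N ↔ c ∈ dotOrthogonal (map (of z).mulVecLin N) := by
    intro c
    simp only [mem_dotOrthogonal_iff, mem_map, forall_exists_index, and_imp,
      forall_apply_eq_imp_iff₂, mulVecLin_apply]
    refine forall₂_congr fun n _ => ?_
    rw [dotProduct_comm, ← dotProduct_mulVec_of, dotProduct_comm]
  ext s
  rw [mem_comap, ← dotOrthogonal_dotOrthogonal (map _ N), mulVecLin_apply, mem_dotOrthogonal_iff,
    mem_dotOrthogonal_iff]
  constructor
  · intro hs c hc
    rw [dotProduct_mulVec_of]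
    exact hs _ ⟨sum_mem fun α _ => smul_mem _ _ (subset_span (mem_range_self α)), (horth c).2 hc⟩
  · rintro hs v ⟨hvz, hvN⟩
    obtain ⟨c, rfl⟩ := (mem_span_range_iff_exists_fun K).1 hvz
    rw [← dotProduct_mulVec_of]
    exact hs c ((horth c).1 hvN)

end KramersWannier

section GeneralizedIsing

variable {ι A I : Type} [Fintype ι] [DecidableEq ι] [Fintype A] [Fintype I]

lemma giL0_eq_supportedPeriodic (z : A → ι → ZMod 2) (x : I → ι → ZMod 2) :
    giL0 ι A I z x = supportedPeriodic ℂ (span (ZMod 2) (range x))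
      (ker (of z).mulVecLin ⊓ span (ZMod 2) (range x)) := by
  set X := span (ZMod 2) (range x)
  have hZ : ∀ v, (∀ i, v ⬝ᵥ x i = 0) ↔ v ∈ dotOrthogonal X := fun v => by
    simp only [mem_dotOrthogonal_span_range_iff, dotProduct_comm v, X]
  have hX : ∀ u, ((∀ α, u ⬝ᵥ z α = 0) ∧ ∀ v, (∀ i, v ⬝ᵥ x i = 0) → u ⬝ᵥ v = 0) ↔
      u ∈ ker (of z).mulVecLin ⊓ X := fun u => by
    rw [mem_inf, ker_mulVecLin_of, mem_dotOrthogonal_span_range_iff,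
      show u ∈ X ↔ u ∈ dotOrthogonal (dotOrthogonal X) by rw [dotOrthogonal_dotOrthogonal],
      mem_dotOrthogonal_iff]
    simp only [← hZ, dotProduct_comm u]
  rw [giL0]
  simp only [dotp_eq_dotProduct, ← and_assoc, hX]
  simp only [hZ]
  rw [fixedSpace_Zop_union_Xop, dotOrthogonal_dotOrthogonal]

lemma dualL0_eq_supportedPeriodic (z' : A → ι → ZMod 2) (x' : I → ι → ZMod 2) :
    dualL0 ι A I z' x' = supportedPeriodic ℂ
      (comap (of z').mulVecLin (map (of z').mulVecLin (span (ZMod 2) (range x'))))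
      (ker (of z').mulVecLin ⊓
        comap (of z').mulVecLin (map (of z').mulVecLin (span (ZMod 2) (range x')))) := by
  have hX : ∀ u, (∀ α, u ⬝ᵥ z' α = 0) ↔ u ∈ ker (of z').mulVecLin := fun u => by
    simp only [ker_mulVecLin_of, mem_dotOrthogonal_span_range_iff, dotProduct_comm u]
  have hZ : ∀ v, (v ∈ span (ZMod 2) (range z') ∧ ∀ i, v ⬝ᵥ x' i = 0) ↔
      v ∈ span (ZMod 2) (range z') ⊓ dotOrthogonal (span (ZMod 2) (range x')) := fun v => by
    simp only [mem_inf, mem_dotOrthogonal_span_range_iff, dotProduct_comm v]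
  rw [dualL0]
  simp only [dotp_eq_dotProduct, ← and_assoc, hZ]
  simp only [hX]
  rw [union_comm, fixedSpace_Zop_union_Xop, dotOrthogonal_span_range_inf_dotOrthogonal,
    inf_of_le_left (ker_le_comap _)]

end GeneralizedIsing

/-- for a GI datum and a Kramers–Wannier dual datum, the symmetric
sector and the dual symmetric sector have equal complex dimensions. -/
theorem statement11 (ι ι' A I : Type)
    [Fintype ι] [DecidableEq ι] [Fintype ι'] [DecidableEq ι'] [Fintype A] [Fintype I]
    (z : A → ι → ZMod 2) (x : I → ι → ZMod 2)
    (z' : A → ι' → ZMod 2) (x' : I → ι' → ZMod 2)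
    (hdual : ∀ (α : A) (i : I), dotp (z α) (x i) = dotp (z' α) (x' i)) :
    Module.finrank ℂ ↥(giL0 ι A I z x) = Module.finrank ℂ ↥(dualL0 ι' A I z' x') := by
  rw [giL0_eq_supportedPeriodic, dualL0_eq_supportedPeriodic, finrank_supportedPeriodic,
    finrank_supportedPeriodic, map_comap_eq_of_le map_le_range, map_mulVecLin_span_range_eq z x z' x' hdual]
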